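/- arXiv:1212.1027 — 8 statements merged into one kernel-verified Lean document; each statement's English description precedes it below -/
import Mathlib

section
/- For every natural number n ≥ 1 and every real x, the absolute value of the derivative of the n-th iterate of cosine is bounded by |d/dx (cos^[n])(x)| ≤ (sin 1)^(n-1). -/
/-!
For `y ∈ [-1, 1]` we have `|cos' y| = |sin y| ≤ sin 1`, and `cos` maps all of `ℝ` into
`[-1, 1]`. By the chain rule the derivative of `cos^[n + 1]` at `x` is `-sin x` times the
derivative of `cos^[n]` at `cos x ∈ [-1, 1]`, a product of `n` factors of absolute value at
most `sin 1`.
-/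

open Real Set

section Iterate

variable {𝕜 : Type*} [NontriviallyNormedField 𝕜] {f : 𝕜 → 𝕜}

theorem deriv_iterate_succ_apply (hf : Differentiable 𝕜 f) (n : ℕ) (x : 𝕜) :
    deriv f^[n + 1] x = deriv f^[n] (f x) * deriv f x := by
  rw [Function.iterate_succ, deriv_comp x ((hf.iterate n) (f x)) (hf x)]

theorem norm_deriv_iterate_le_pow {s : Set 𝕜} {K : ℝ} (hf : Differentiable 𝕜 f)
    (hs : MapsTo f s s) (hK : ∀ y ∈ s, ‖deriv f y‖ ≤ K) (n : ℕ) :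
    ∀ y ∈ s, ‖deriv f^[n] y‖ ≤ K ^ n := by
  induction n with
  | zero => simp
  | succ n ih =>
    intro y hy
    have hK₀ : 0 ≤ K := (norm_nonneg _).trans (hK y hy)
    rw [deriv_iterate_succ_apply hf, norm_mul, pow_succ]
    exact mul_le_mul (ih (f y) (hs hy)) (hK y hy) (norm_nonneg _) (pow_nonneg hK₀ n)

end Iterate

theorem Real.abs_sin_le_sin_of_abs_le {a y : ℝ} (ha : a ≤ π / 2) (hy : |y| ≤ a) :
    |sin y| ≤ sin a := by
  have hpi : π / 2 ≤ π := by linarith [pi_pos]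
  rw [abs_sin_eq_sin_abs_of_abs_le_pi (by linarith)]
  exact sin_le_sin_of_le_of_le_pi_div_two (by linarith [abs_nonneg y, pi_pos]) ha hy

theorem Real.abs_deriv_cos_le_sin_one {y : ℝ} (hy : y ∈ Icc (-1) 1) : |deriv cos y| ≤ sin 1 := by
  rw [deriv_cos', abs_neg]
  exact abs_sin_le_sin_of_abs_le (by linarith [pi_gt_three]) (abs_le.mpr hy)

theorem abs_deriv_iterate_cos_le_general (n : ℕ) (x : ℝ) :
    |deriv (Real.cos^[n]) x| ≤ (Real.sin 1) ^ (n - 1) := by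
  cases n with
  | zero => simp
  | succ n =>
    have h_iterate : |deriv cos^[n] (cos x)| ≤ sin 1 ^ n :=
      norm_deriv_iterate_le_pow differentiable_cos (mapsTo_cos _)
        (fun y hy ↦ abs_deriv_cos_le_sin_one hy) n _ (cos_mem_Icc x)
    have h_cos : |deriv cos x| ≤ 1 := by simpa using abs_sin_le_one x
    have h_sin_one : 0 ≤ sin 1 :=
      sin_nonneg_of_nonneg_of_le_pi zero_le_one (by linarith [pi_gt_three])
    rw [deriv_iterate_succ_apply differentiable_cos, abs_mul, Nat.add_sub_cancel,
      ← mul_one (sin 1 ^ n)]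
    exact mul_le_mul h_iterate h_cos (abs_nonneg _) (pow_nonneg h_sin_one n)

theorem abs_deriv_iterate_cos_le (n : ℕ) (hn : 1 ≤ n) (x : ℝ) :
    |deriv (Real.cos^[n]) x| ≤ (Real.sin 1) ^ (n - 1) :=
  abs_deriv_iterate_cos_le_general n x
end

section
/- For every real x, the sequence of derivatives of the iterates of cosine at x tends to zero: lim_{n → ∞} d/dx (cos^[n])(x) = 0. -/
/-!
Every iterate `cos^[k] x` with `k ≥ 1` lies in `[-1, 1]`, where `|cos'| = |sin| ≤ sin 1 < 1`.
By the chain rule, `deriv (cos^[n + 1]) x` is a product of `n + 1` values of `-sin` at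
`x, cos x, …, cos^[n] x`, all but the first of which have absolute value at most `sin 1`;
so the derivatives decay geometrically.
-/

open Filter Topology

section Iterate

variable {𝕜 : Type*} [NontriviallyNormedField 𝕜] {f : 𝕜 → 𝕜} {c : ℝ}

theorem norm_deriv_iterate_succ_le (hf : Differentiable 𝕜 f) (hc : ∀ y, ‖deriv f (f y)‖ ≤ c)
    (n : ℕ) (x : 𝕜) : ‖deriv f^[n + 1] x‖ ≤ c ^ n * ‖deriv f x‖ := by
  have hc₀ : 0 ≤ c := (norm_nonneg _).trans (hc 0)
  induction n generalizing x with
  | zero => simp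
  | succ n ih =>
    rw [Function.iterate_succ, deriv_comp x ((hf.iterate _).differentiableAt) (hf x), norm_mul]
    calc ‖deriv f^[n + 1] (f x)‖ * ‖deriv f x‖
        ≤ c ^ n * c * ‖deriv f x‖ := by
          gcongr
          exact (ih (f x)).trans (mul_le_mul_of_nonneg_left (hc x) (pow_nonneg hc₀ n))
      _ = c ^ (n + 1) * ‖deriv f x‖ := by rw [pow_succ]

theorem tendsto_deriv_iterate_nhds_zero (hf : Differentiable 𝕜 f) (hc : ∀ y, ‖deriv f (f y)‖ ≤ c)
    (hc₁ : c < 1) (x : 𝕜) : Tendsto (fun n : ℕ => deriv f^[n] x) atTop (𝓝 0) := by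
  have hc₀ : 0 ≤ c := (norm_nonneg _).trans (hc 0)
  rw [← tendsto_add_atTop_iff_nat 1]
  refine squeeze_zero_norm (norm_deriv_iterate_succ_le hf hc · x) ?_
  simpa using (tendsto_pow_atTop_nhds_zero_of_lt_one hc₀ hc₁).mul_const ‖deriv f x‖

end Iterate

namespace Real

theorem abs_sin_le_sin_one {y : ℝ} (hy : |y| ≤ 1) : |sin y| ≤ sin 1 := by
  have hπ : (1 : ℝ) ≤ π / 2 := by linarith [pi_gt_three]
  obtain ⟨hy₁, hy₂⟩ := abs_le.mp hy
  refine abs_le.mpr ⟨?_, sin_le_sin_of_le_of_le_pi_div_two (by linarith) hπ hy₂⟩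
  rw [← sin_neg]
  exact sin_le_sin_of_le_of_le_pi_div_two (by linarith) (by linarith) hy₁

theorem norm_deriv_cos_cos_le (y : ℝ) : ‖deriv cos (cos y)‖ ≤ sin 1 := by
  rw [deriv_cos, norm_neg, norm_eq_abs]
  exact abs_sin_le_sin_one (abs_cos_le_one y)

end Real

theorem tendsto_deriv_iterate_cos (x : ℝ) :
    Tendsto (fun n : ℕ => deriv (Real.cos^[n]) x) atTop (𝓝 0) :=
  tendsto_deriv_iterate_nhds_zero Real.differentiable_cos Real.norm_deriv_cos_cos_le
    (Real.sin_lt one_pos) x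
end

section
/- Let D be the unique real number with cos(D) = D. For every real x, the iterates of cosine starting at x converge to D: lim_{n → ∞} cos^[n](x) = D. -/
open Filter Topology

/-! On `[-1, 1]` the derivative of `cos` is bounded by `sin 1 < 1`, so `cos` is a contraction
there. Every iterate `cos^[n + 1] x` lies in `[-1, 1]`, as does the fixed point `D = cos D`, so
the distance to `D` shrinks at least geometrically with ratio `sin 1`. -/

open Real
open scoped NNReal

theorem LipschitzOnWith.tendsto_iterate_of_isFixedPt {α : Type*} [PseudoMetricSpace α]
    {f : α → α} {s : Set α} {K : ℝ≥0} (hf : LipschitzOnWith K f s) (hK : K < 1)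
    (hfs : Set.MapsTo f s s) {p x : α} (hp : p ∈ s) (hfp : Function.IsFixedPt f p) (hx : x ∈ s) :
    Tendsto (fun n => f^[n] x) atTop (𝓝 p) := by
  have hdist (n : ℕ) : dist (f^[n] x) p ≤ K ^ n * dist x p := by
    induction n with
    | zero => simp
    | succ n ih =>
      calc dist (f^[n + 1] x) p = dist (f (f^[n] x)) (f p) := by
            rw [Function.iterate_succ_apply', hfp.eq]
        _ ≤ K * dist (f^[n] x) p := hf.dist_le_mul _ (hfs.iterate n hx) _ hp
        _ ≤ K * (K ^ n * dist x p) := by gcongr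
        _ = K ^ (n + 1) * dist x p := by ring
  refine tendsto_iff_dist_tendsto_zero.mpr (squeeze_zero (fun n => dist_nonneg) hdist ?_)
  simpa only [zero_mul] using
    (tendsto_pow_atTop_nhds_zero_of_lt_one K.coe_nonneg hK).mul_const (dist x p)

namespace Real

theorem abs_sin_le_sin_of_abs_le_s6 {x y : ℝ} (hxy : |x| ≤ y) (hy : y ≤ π / 2) :
    |sin x| ≤ sin y := by
  have hπ := pi_pos
  rw [abs_sin_eq_sin_abs_of_abs_le_pi (by linarith)]
  exact sin_le_sin_of_le_of_le_pi_div_two (by linarith [abs_nonneg x]) hy hxy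

theorem lipschitzOnWith_cos_Icc {r : ℝ} (hr₀ : 0 ≤ r) (hr : r ≤ π / 2) :
    LipschitzOnWith (sin r).toNNReal cos (Set.Icc (-r) r) := by
  refine Convex.lipschitzOnWith_of_nnnorm_deriv_le (fun y _ => differentiableAt_cos)
    (fun y hy => ?_) (convex_Icc _ _)
  rw [deriv_cos, ← NNReal.coe_le_coe, coe_nnnorm, norm_neg, Real.norm_eq_abs,
    coe_toNNReal _ (sin_nonneg_of_nonneg_of_le_pi hr₀ (by linarith [pi_pos]))]
  exact abs_sin_le_sin_of_abs_le_s6 (abs_le.mpr hy) hr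

end Real

theorem tendsto_iterate_cos (D : ℝ) (hD : Real.cos D = D) (x : ℝ) :
    Tendsto (fun n : ℕ => Real.cos^[n] x) atTop (𝓝 D) := by
  have hK : (sin 1).toNNReal < 1 := toNNReal_lt_one.mpr (sin_lt one_pos)
  have hr : (1 : ℝ) ≤ π / 2 := by linarith [pi_gt_three]
  have hcos := (lipschitzOnWith_cos_Icc zero_le_one hr).tendsto_iterate_of_isFixedPt hK
    (mapsTo_cos _) (hD ▸ cos_mem_Icc D) hD (cos_mem_Icc x)
  rw [← tendsto_add_atTop_iff_nat 1]
  simpa only [Function.iterate_succ_apply] using hcos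
end

section
/- For every real x, the iterates of sine starting at x converge to zero: lim_{n → ∞} sin^[n](x) = 0. -/
/-! The map `y ↦ |sin y|` sends `[0, ∞)` into itself and lies strictly below the diagonal off `0`,
so its orbits decrease to a fixed point, which must be `0`; and `|sin^[n] x| = |sin|^[n] |x|`
because `sin` is odd. -/

open Filter Topology Function

theorem tendsto_iterate_zero_of_le_self {g : ℝ → ℝ} (hg : Continuous g)
    (hg_nonneg : ∀ y, 0 ≤ y → 0 ≤ g y) (hg_le : ∀ y, 0 ≤ y → g y ≤ y)
    (hg_ne : ∀ y, 0 < y → g y ≠ y) {y : ℝ} (hy : 0 ≤ y) :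
    Tendsto (fun n => g^[n] y) atTop (𝓝 0) := by
  have h_nonneg : ∀ n, 0 ≤ g^[n] y := by
    intro n
    induction n with
    | zero => exact hy
    | succ n ih => rw [iterate_succ_apply']; exact hg_nonneg _ ih
  have h_anti : Antitone fun n => g^[n] y := antitone_nat_of_succ_le fun n => by
    rw [iterate_succ_apply']
    exact hg_le _ (h_nonneg n)
  have h_lim := tendsto_atTop_ciInf h_anti ⟨0, Set.forall_mem_range.2 h_nonneg⟩
  have h_fixed : IsFixedPt g (⨅ n, g^[n] y) := isFixedPt_of_tendsto_iterate h_lim hg.continuousAt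
  have h_inf_nonneg : 0 ≤ ⨅ n, g^[n] y := le_ciInf h_nonneg
  obtain h_zero | h_pos := h_inf_nonneg.eq_or_lt
  · rwa [← h_zero] at h_lim
  · exact absurd h_fixed (hg_ne _ h_pos)

theorem abs_iterate_sin (n : ℕ) (x : ℝ) :
    |Real.sin^[n] x| = (fun y => |Real.sin y|)^[n] |x| := by
  have h_semiconj : Semiconj abs Real.sin fun y => |Real.sin y| := fun y => by
    rcases abs_choice y with h | h <;> simp [h, Real.sin_neg]
  exact h_semiconj.iterate_right n x

theorem tendsto_iterate_sin (x : ℝ) :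
    Tendsto (fun n : ℕ => Real.sin^[n] x) atTop (𝓝 0) := by
  rw [tendsto_zero_iff_abs_tendsto_zero]
  simp only [comp_def, abs_iterate_sin]
  refine tendsto_iterate_zero_of_le_self (by fun_prop) (fun y _ => abs_nonneg _)
    (fun y hy => ?_) (fun y hy => ?_) (abs_nonneg x)
  · simpa [abs_of_nonneg hy] using Real.abs_sin_le_abs (x := y)
  · simpa [abs_of_pos hy] using (Real.abs_sin_lt_abs hy.ne').ne
end

section
/- For every natural number n > 1 and every real x, the value of the n-th iterate of cosine satisfies cos^[n-1-(n % 2)](1) ≤ cos^[n](x) ≤ cos^[n-2+(n % 2)](1), where n % 2 denotes the remainder of n modulo 2. -/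
/-!
On `[0, 1]` the cosine is antitone and maps the interval into itself, and `cos (cos x)` lies
in `[cos 1, 1]` for every real `x`. An antitone self-map sends the interval between two
consecutive iterates of `1` onto the interval between the next two, so `cos^[n] x` is trapped
between `cos^[n-2] 1` and `cos^[n-1] 1`; these iterates alternate, the odd ones lying below
their even neighbours, which decides which of the two is the lower bound.
-/

open Real Set

namespace AntitoneOn

variable {α : Type*} [LinearOrder α] {f : α → α} {s : Set α} {a : α}

theorem iterate_mem_uIcc (hf : AntitoneOn f s) (hs : MapsTo f s s) (hsc : s.OrdConnected)
    (ha : a ∈ s) {y : α} (hy : y ∈ uIcc a (f a)) (m : ℕ) :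
    f^[m] y ∈ uIcc (f^[m] a) (f^[m + 1] a) := by
  induction m with
  | zero => simpa using hy
  | succ m ih =>
    have hsub : uIcc (f^[m] a) (f^[m + 1] a) ⊆ s :=
      hsc.uIcc_subset (hs.iterate m ha) (hs.iterate (m + 1) ha)
    simpa only [Function.iterate_succ_apply'] using (hf.mono hsub).mapsTo_uIcc ih

theorem iterate_odd_le (hf : AntitoneOn f s) (hs : MapsTo f s s) (ha : a ∈ s) (hfa : f a ≤ a)
    (k : ℕ) : f^[2 * k + 1] a ≤ f^[2 * k] a ∧ f^[2 * k + 1] a ≤ f^[2 * k + 2] a := by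
  have hmem (m : ℕ) : f^[m] a ∈ s := hs.iterate m ha
  induction k with
  | zero => exact ⟨hfa, hf (hs ha) ha hfa⟩
  | succ k ih =>
    rw [show 2 * (k + 1) = 2 * k + 2 by ring]
    have hle : f^[2 * k + 3] a ≤ f^[2 * k + 2] a := by
      simpa only [Function.iterate_succ_apply'] using hf (hmem _) (hmem _) ih.2
    refine ⟨hle, ?_⟩
    simpa only [Function.iterate_succ_apply'] using hf (hmem _) (hmem _) hle

end AntitoneOn

theorem mapsTo_cos_Icc_zero_one : MapsTo cos (Icc 0 1) (Icc 0 1) := fun x hx =>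
  ⟨cos_nonneg_of_mem_Icc ⟨by linarith [pi_gt_three, hx.1], by linarith [pi_gt_three, hx.2]⟩,
    cos_le_one x⟩

theorem antitoneOn_cos_Icc_zero_one : AntitoneOn cos (Icc 0 1) :=
  antitoneOn_cos.mono (Icc_subset_Icc_right (by linarith [pi_gt_three]))

theorem cos_cos_mem_Icc (x : ℝ) : cos (cos x) ∈ Icc (cos 1) 1 := by
  refine ⟨?_, cos_le_one _⟩
  rw [← cos_abs (cos x)]
  exact antitoneOn_cos_Icc_zero_one ⟨abs_nonneg _, abs_cos_le_one x⟩ ⟨zero_le_one, le_rfl⟩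
    (abs_cos_le_one x)

theorem iterate_cos_mem_uIcc (x : ℝ) (m : ℕ) :
    cos^[m + 2] x ∈ uIcc (cos^[m] 1) (cos^[m + 1] 1) := by
  rw [Function.iterate_add_apply]
  refine antitoneOn_cos_Icc_zero_one.iterate_mem_uIcc mapsTo_cos_Icc_zero_one ordConnected_Icc
    ⟨zero_le_one, le_rfl⟩ ?_ m
  simpa only [uIcc_of_ge (cos_le_one 1)] using cos_cos_mem_Icc x

theorem iterate_cos_one_odd_le (k : ℕ) :
    cos^[2 * k + 1] 1 ≤ cos^[2 * k] 1 ∧ cos^[2 * k + 1] 1 ≤ cos^[2 * k + 2] 1 :=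
  antitoneOn_cos_Icc_zero_one.iterate_odd_le mapsTo_cos_Icc_zero_one ⟨zero_le_one, le_rfl⟩
    (cos_le_one 1) k

theorem iterate_cos_range_bounds (n : ℕ) (hn : 1 < n) (x : ℝ) :
    Real.cos^[n - 1 - (n % 2)] 1 ≤ Real.cos^[n] x ∧
    Real.cos^[n] x ≤ Real.cos^[n - 2 + (n % 2)] 1 := by
  obtain ⟨k, rfl | rfl⟩ : ∃ k, n = 2 * k + 2 ∨ n = 2 * k + 3 := ⟨(n - 2) / 2, by omega⟩
  · have h := iterate_cos_mem_uIcc x (2 * k)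
    rw [uIcc_of_ge (iterate_cos_one_odd_le k).1] at h
    rwa [show 2 * k + 2 - 1 - (2 * k + 2) % 2 = 2 * k + 1 by omega,
      show 2 * k + 2 - 2 + (2 * k + 2) % 2 = 2 * k by omega]
  · have h := iterate_cos_mem_uIcc x (2 * k + 1)
    rw [uIcc_of_le (iterate_cos_one_odd_le k).2] at h
    rwa [show 2 * k + 3 - 1 - (2 * k + 3) % 2 = 2 * k + 1 by omega,
      show 2 * k + 3 - 2 + (2 * k + 3) % 2 = 2 * k + 2 by omega]
end

section
/- For every natural number n ≥ 2 and every real x, the derivative of the n-th iterate of cosine vanishes at x if and only if x is an integer multiple of π/2: d/dx (cos^[n])(x) = 0 ↔ ∃ k : ℤ, x = k · π/2. -/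
/-!
By the chain rule, `(cos^[n])' x = ∏_{i<n} -sin (cos^[i] x)`. For `i ≥ 2` the point `cos^[i] x`
lies in `[cos 1, 1] ⊆ (0, π)`, so only the factors `sin x` and `sin (cos x)` can vanish, and the
latter vanishes iff `cos x = 0` because `|cos x| ≤ 1 < π`. Finally `sin x = 0 ∨ cos x = 0` iff
`sin (2x) = 0`.
-/

open Real

theorem hasDerivAt_iterate_of_differentiable {𝕜 : Type*} [NontriviallyNormedField 𝕜]
    {f : 𝕜 → 𝕜} (hf : Differentiable 𝕜 f) (n : ℕ) (x : 𝕜) :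
    HasDerivAt f^[n] (∏ i ∈ Finset.range n, deriv f (f^[i] x)) x := by
  induction n with
  | zero => simpa using hasDerivAt_id x
  | succ n ih =>
    rw [Function.iterate_succ', Finset.prod_range_succ, mul_comm]
    exact (hf _).hasDerivAt.comp x ih

lemma sin_cos_eq_zero_iff (x : ℝ) : sin (cos x) = 0 ↔ cos x = 0 :=
  sin_eq_zero_iff_of_lt_of_lt (by linarith [neg_one_le_cos x, pi_gt_three])
    (by linarith [cos_le_one x, pi_gt_three])

lemma sin_cos_cos_pos (x : ℝ) : 0 < sin (cos (cos x)) := by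
  have hcos : 0 < cos (cos x) := cos_pos_of_mem_Ioo
    ⟨by linarith [neg_one_le_cos x, pi_gt_three], by linarith [cos_le_one x, pi_gt_three]⟩
  exact sin_pos_of_pos_of_lt_pi hcos (by linarith [cos_le_one (cos x), pi_gt_three])

lemma sin_eq_zero_or_cos_eq_zero_iff (x : ℝ) :
    sin x = 0 ∨ cos x = 0 ↔ ∃ k : ℤ, x = k * (π / 2) := by
  have hsin_two_mul : sin x = 0 ∨ cos x = 0 ↔ sin (2 * x) = 0 := by
    rw [sin_two_mul, mul_eq_zero, mul_eq_zero]
    norm_num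
  rw [hsin_two_mul, sin_eq_zero_iff]
  refine exists_congr fun k => ?_
  constructor <;> intro h <;> linarith

theorem deriv_iterate_cos_eq_zero_iff (n : ℕ) (hn : 2 ≤ n) (x : ℝ) :
    deriv (Real.cos^[n]) x = 0 ↔ ∃ k : ℤ, x = k * (π / 2) := by
  obtain ⟨m, rfl⟩ := Nat.exists_eq_add_of_le' hn
  have hprod : ∏ i ∈ Finset.range m, -sin (cos^[i + 1 + 1] x) ≠ 0 :=
    Finset.prod_ne_zero_iff.2 fun i _ => by
      rw [Function.iterate_succ_apply', Function.iterate_succ_apply']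
      exact neg_ne_zero.2 (sin_cos_cos_pos _).ne'
  rw [(hasDerivAt_iterate_of_differentiable differentiable_cos (m + 2) x).deriv,
    Finset.prod_range_succ', Finset.prod_range_succ']
  simp only [deriv_cos', zero_add, Function.iterate_zero_apply, Function.iterate_one,
    mul_eq_zero, neg_eq_zero, hprod, false_or]
  rw [sin_cos_eq_zero_iff, or_comm]
  exact sin_eq_zero_or_cos_eq_zero_iff x
end

section
/- For every natural number n ≥ 1 and every real x, the derivative of the n-th iterate of sine vanishes at x if and only if x = π/2 + kπ for some integer k: d/dx (sin^[n])(x) = 0 ↔ ∃ k : ℤ, x = π/2 + k · π. -/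
/-! The chain rule gives `(sin^[n])' x = ∏_{k < n} cos (sin^[k] x)`. For `k ≥ 1` the point
`sin^[k] x` lies in `[-1, 1] ⊆ (-π/2, π/2)`, where cosine is positive, so only the factor
`cos x` can vanish. -/

open Real

theorem hasDerivAt_iterate_sin (n : ℕ) (x : ℝ) :
    HasDerivAt (sin^[n]) (∏ k ∈ Finset.range n, cos (sin^[k] x)) x := by
  induction n with
  | zero => simpa using hasDerivAt_id x
  | succ n ih =>
    rw [Function.iterate_succ', Finset.prod_range_succ, mul_comm]
    exact (hasDerivAt_sin _).comp x ih

theorem cos_sin_pos (y : ℝ) : 0 < cos (sin y) :=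
  cos_pos_of_mem_Ioo ⟨by linarith [neg_one_le_sin y, pi_gt_three],
    by linarith [sin_le_one y, pi_gt_three]⟩

theorem deriv_iterate_sin_eq_zero_iff_cos_eq_zero {n : ℕ} (hn : 1 ≤ n) (x : ℝ) :
    deriv (sin^[n]) x = 0 ↔ cos x = 0 := by
  rw [(hasDerivAt_iterate_sin n x).deriv, Finset.prod_eq_zero_iff]
  constructor
  · rintro ⟨k, -, hk⟩
    obtain _ | k := k
    · exact hk
    · rw [Function.iterate_succ_apply'] at hk
      exact absurd hk (cos_sin_pos _).ne'
  · exact fun h ↦ ⟨0, Finset.mem_range.mpr hn, h⟩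

theorem deriv_iterate_sin_eq_zero_iff (n : ℕ) (hn : 1 ≤ n) (x : ℝ) :
    deriv (Real.sin^[n]) x = 0 ↔ ∃ k : ℤ, x = π / 2 + k * π := by
  rw [deriv_iterate_sin_eq_zero_iff_cos_eq_zero hn, cos_eq_zero_iff]
  refine exists_congr fun k ↦ ?_
  constructor <;> intro h <;> linarith
end

section
/- For every natural number k ≥ 1, the k-th iterated derivative at 0 of the m-th iterate of cosine tends to zero as m tends to infinity: lim_{m → ∞} iteratedDeriv k (cos^[m]) 0 = 0; thus every Maclaurin coefficient of the iterates of cosine (other than the constant term, which tends to the Dottie number) vanishes in the limit. -/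
/-!
Write `f m = cos^[m]`. Since `(f (m + 1))' = -(sin ∘ f m) * (f m)'` and
`(sin ∘ f m)' = f (m + 1) * (f m)'`, the Leibniz rule expresses the `(n + 1)`-st derivatives of
`f (m + 1)` and of `sin ∘ f m` through derivatives of order at most `n + 1` of `f m`, `f (m + 1)`
and `sin ∘ f m`. By strong induction on `n`, every term tends to `0` except
`sin (f m x) * (f m)⁽ⁿ⁺¹⁾ x`, and `|sin (cos y)| ≤ sin 1 < 1`; so `aₘ = |(f m)⁽ⁿ⁺¹⁾ x|`
satisfies `aₘ₊₁ ≤ sin 1 * aₘ + rₘ` with `rₘ → 0`, which forces `aₘ → 0`.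
-/

open Filter Topology Real Finset

theorem tendsto_zero_of_le_mul_add {a r : ℕ → ℝ} {s : ℝ} (hs₀ : 0 ≤ s) (hs₁ : s < 1)
    (ha : ∀ m, 0 ≤ a m) (hrec : ∀ᶠ m in atTop, a (m + 1) ≤ s * a m + r m)
    (hr : Tendsto r atTop (𝓝 0)) : Tendsto a atTop (𝓝 0) := by
  refine tendsto_order.2 ⟨fun b hb => .of_forall fun m => hb.trans_le (ha m), fun ε hε => ?_⟩
  -- once `r < (1 - s) ε / 2`, the excess `a - ε / 2` shrinks by the factor `s` at each step
  obtain ⟨N, hN⟩ := eventually_atTop.1 <| hrec.and <|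
    hr.eventually (gt_mem_nhds (mul_pos (sub_pos.2 hs₁) (half_pos hε)))
  have hgeom (i : ℕ) : a (N + i) - ε / 2 ≤ s ^ i * (a N - ε / 2) :=
    le_geom (u := fun i => a (N + i) - ε / 2) hs₀ i fun k _ => by
      obtain ⟨hstep, hsmall⟩ := hN (N + k) (by omega)
      rw [← add_assoc]
      linarith
  have hlim : Tendsto (fun i => s ^ i * (a N - ε / 2) + ε / 2) atTop (𝓝 (ε / 2)) := by
    simpa using ((tendsto_pow_atTop_nhds_zero_of_lt_one hs₀ hs₁).mul_const _).add_const (ε / 2)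
  filter_upwards [(tendsto_sub_atTop_nat N).eventually <|
    hlim.eventually (gt_mem_nhds (half_lt_self hε)), eventually_ge_atTop N] with m hm hNm
  have := hgeom (m - N)
  rw [Nat.add_sub_cancel' hNm] at this
  linarith

theorem iteratedDeriv_mul_deriv {𝕜 : Type*} [NontriviallyNormedField 𝕜] {n : ℕ}
    {g h : 𝕜 → 𝕜} (hg : ContDiff 𝕜 n g) (hh : ContDiff 𝕜 (n + 1) h) (x : 𝕜) :
    iteratedDeriv n (fun y => g y * deriv h y) x =
      ∑ i ∈ range (n + 1),
        n.choose i * iteratedDeriv i g x * iteratedDeriv (n - i + 1) h x := by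
  simp only [iteratedDeriv_fun_mul hg.contDiffAt hh.deriv'.contDiffAt, iteratedDeriv_succ']

theorem contDiff_iterate_cos {n : WithTop ℕ∞} (m : ℕ) : ContDiff ℝ n cos^[m] := by
  induction m with
  | zero => exact contDiff_id
  | succ m ih => exact Function.iterate_succ' cos m ▸ contDiff_cos.comp ih

theorem deriv_iterate_cos_succ (m : ℕ) :
    deriv cos^[m + 1] = fun x => -(sin (cos^[m] x) * deriv cos^[m] x) := by
  ext x
  rw [Function.iterate_succ', Function.comp_def,
    (differentiable_cos.iterate m x).hasDerivAt.cos.deriv]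
  ring

theorem deriv_sin_iterate_cos (m : ℕ) :
    deriv (fun x => sin (cos^[m] x)) = fun x => cos^[m + 1] x * deriv cos^[m] x := by
  ext x
  rw [(differentiable_cos.iterate m x).hasDerivAt.sin.deriv,
    Function.iterate_succ_apply']

theorem iteratedDeriv_iterate_cos_succ_succ (m n : ℕ) (x : ℝ) :
    iteratedDeriv (n + 1) cos^[m + 1] x = -∑ i ∈ range (n + 1),
      n.choose i * iteratedDeriv i (fun y => sin (cos^[m] y)) x *
        iteratedDeriv (n - i + 1) cos^[m] x := by
  rw [iteratedDeriv_succ', deriv_iterate_cos_succ, iteratedDeriv_fun_neg,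
    iteratedDeriv_mul_deriv (contDiff_iterate_cos m).sin (contDiff_iterate_cos m)]

theorem iteratedDeriv_sin_iterate_cos_succ (m n : ℕ) (x : ℝ) :
    iteratedDeriv (n + 1) (fun y => sin (cos^[m] y)) x = ∑ i ∈ range (n + 1),
      n.choose i * iteratedDeriv i cos^[m + 1] x * iteratedDeriv (n - i + 1) cos^[m] x := by
  rw [iteratedDeriv_succ', deriv_sin_iterate_cos,
    iteratedDeriv_mul_deriv (contDiff_iterate_cos (m + 1)) (contDiff_iterate_cos m)]

theorem abs_sin_cos_le_sin_one (y : ℝ) : |sin (cos y)| ≤ sin 1 := by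
  have hpi : 1 ≤ π / 2 := by linarith [two_le_pi]
  rw [abs_le, ← sin_neg]
  exact ⟨sin_le_sin_of_le_of_le_pi_div_two (by linarith) (by linarith [cos_le_one y])
    (neg_one_le_cos y), sin_le_sin_of_le_of_le_pi_div_two (by linarith [neg_one_le_cos y]) hpi
    (cos_le_one y)⟩

section

variable (x : ℝ)

theorem tendsto_iteratedDeriv_sin_iterate_cos {n : ℕ}
    (hcos : ∀ j, 1 ≤ j → j ≤ n + 1 →
      Tendsto (fun m => iteratedDeriv j cos^[m] x) atTop (𝓝 0)) :
    Tendsto (fun m => iteratedDeriv (n + 1) (fun y => sin (cos^[m] y)) x) atTop (𝓝 0) := by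
  simp_rw [iteratedDeriv_sin_iterate_cos_succ]
  have hterm : ∀ i ∈ range (n + 1), Tendsto (fun m => (n.choose i : ℝ) *
      iteratedDeriv i cos^[m + 1] x * iteratedDeriv (n - i + 1) cos^[m] x) atTop (𝓝 0) := by
    intro i hi
    have hin : i ≤ n := Nat.lt_succ_iff.1 (mem_range.1 hi)
    have hbdd : IsBoundedUnder (· ≤ ·) atTop
        (norm ∘ fun m => (n.choose i : ℝ) * iteratedDeriv i cos^[m + 1] x) := by
      rcases Nat.eq_zero_or_pos i with rfl | hi₀
      · exact isBoundedUnder_of ⟨1, fun m => by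
          simpa only [Function.comp_apply, iteratedDeriv_zero, Nat.choose_zero_right,
            Nat.cast_one, one_mul, norm_eq_abs, Function.iterate_succ_apply']
            using abs_cos_le_one _⟩
      · exact (((hcos i hi₀ (by omega)).comp (tendsto_add_atTop_nat 1)).const_mul _).norm
          |>.isBoundedUnder_le
    exact isBoundedUnder_le_mul_tendsto_zero hbdd (hcos _ (by omega) (by omega))
  simpa using tendsto_finsetSum _ hterm

theorem tendsto_iteratedDeriv_iterate_cos_succ {n : ℕ}
    (hcos : ∀ j, 1 ≤ j → j ≤ n → Tendsto (fun m => iteratedDeriv j cos^[m] x) atTop (𝓝 0)) :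
    Tendsto (fun m => iteratedDeriv (n + 1) cos^[m] x) atTop (𝓝 0) := by
  set r : ℕ → ℝ := fun m => ∑ i ∈ range n, n.choose (i + 1) *
    iteratedDeriv (i + 1) (fun y => sin (cos^[m] y)) x *
      iteratedDeriv (n - (i + 1) + 1) cos^[m] x
  have hr : Tendsto r atTop (𝓝 0) := by
    have hterm : ∀ i ∈ range n, Tendsto (fun m => (n.choose (i + 1) : ℝ) *
        iteratedDeriv (i + 1) (fun y => sin (cos^[m] y)) x *
          iteratedDeriv (n - (i + 1) + 1) cos^[m] x) atTop (𝓝 0) := by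
      intro i hi
      have hin : i < n := mem_range.1 hi
      have hsin := tendsto_iteratedDeriv_sin_iterate_cos x (n := i)
        fun j hj₁ hj₂ => hcos j hj₁ (by omega)
      simpa using (hsin.const_mul _).mul (hcos _ (by omega) (by omega))
    simpa using tendsto_finsetSum _ hterm
  have hrec : ∀ᶠ m in atTop, |iteratedDeriv (n + 1) cos^[m + 1] x| ≤
      sin 1 * |iteratedDeriv (n + 1) cos^[m] x| + |r m| := by
    filter_upwards [eventually_ge_atTop 1] with m hm
    obtain ⟨m, rfl⟩ := Nat.exists_eq_add_of_le' hm
    rw [iteratedDeriv_iterate_cos_succ_succ, sum_range_succ', abs_neg]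
    refine (abs_add_le _ _).trans ?_
    rw [add_comm]
    gcongr
    rw [Nat.choose_zero_right, Nat.cast_one, one_mul, iteratedDeriv_zero, Nat.sub_zero, abs_mul,
      Function.iterate_succ_apply']
    gcongr
    exact abs_sin_cos_le_sin_one _
  exact (tendsto_zero_iff_abs_tendsto_zero _).2 <| tendsto_zero_of_le_mul_add
    (sin_nonneg_of_nonneg_of_le_pi zero_le_one (by linarith [two_le_pi])) (sin_lt one_pos)
    (fun m => abs_nonneg _) hrec (by simpa using hr.abs)

theorem tendsto_iteratedDeriv_iterate_cos {k : ℕ} (hk : 1 ≤ k) :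
    Tendsto (fun m => iteratedDeriv k cos^[m] x) atTop (𝓝 0) := by
  induction k using Nat.strong_induction_on with
  | _ k ih =>
    obtain ⟨n, rfl⟩ := Nat.exists_eq_add_of_le' hk
    exact tendsto_iteratedDeriv_iterate_cos_succ x fun j hj₁ hj₂ => ih j (by omega) hj₁

end

theorem tendsto_iteratedDeriv_iterate_cos_at_zero (k : ℕ) (hk : 1 ≤ k) :
    Tendsto (fun m : ℕ => iteratedDeriv k (Real.cos^[m]) 0) atTop (𝓝 0) :=
  tendsto_iteratedDeriv_iterate_cos 0 hk
end
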